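/- arXiv:1208.5217 — 2 statements merged into one kernel-verified Lean document; each statement's English description precedes it below -/
import Mathlib

section
/- Let φ : E → ℝ ∪ {+∞} be proper, lower semicontinuous and convex, and suppose the Fenchel conjugate φ* is real-valued and differentiable at every point of E. Let (x_n)_{n∈ℕ} and x be in L¹_E(S,μ) with x_n ⇀ x and I_φ(x_n) → I_φ(x) < +∞, and assume x(s) ∈ int dom φ for μ-almost every s ∈ S. Then ‖x_n − x‖₁ → 0. -/
open MeasureTheory Filter Topology Set

open Classical in
/-- The integral functional `I_φ(x) = ∫_S φ(x(s)) dμ(s)` with values in `ℝ ∪ {+∞}`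
(modelled inside `EReal`; it never takes the value `-∞`). -/
noncomputable def Iphi {S E : Type*} [MeasurableSpace S] (μ : Measure S)
    (φ : E → EReal) (x : S → E) : EReal :=
  if (Integrable (fun s => (φ (x s)).toReal) μ ∧ ∀ᵐ s ∂μ, φ (x s) ≠ ⊤)
  then ((∫ s, (φ (x s)).toReal ∂μ : ℝ) : EReal)
  else ⊤

/-- The Fenchel conjugate `φ*(y) = sup_v (⟨v, y⟩ − φ(v))` of `φ : ℝ^d → ℝ ∪ {+∞}`. -/
noncomputable def fenchel {d : ℕ} (φ : EuclideanSpace ℝ (Fin d) → EReal)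
    (y : EuclideanSpace ℝ (Fin d)) : EReal :=
  ⨆ v : EuclideanSpace ℝ (Fin d), ((inner ℝ v y : ℝ) : EReal) - φ v

/-- Weak convergence in `L¹_E(S,μ)`: pairing against every essentially bounded measurable
`g : S → E`. -/
def WeakConvL1 {S : Type*} [MeasurableSpace S] (μ : Measure S) {d : ℕ}
    (x : ℕ → S → EuclideanSpace ℝ (Fin d)) (x₀ : S → EuclideanSpace ℝ (Fin d)) : Prop :=
  ∀ g : S → EuclideanSpace ℝ (Fin d), AEStronglyMeasurable g μ →
    (∃ C : ℝ, ∀ᵐ s ∂μ, ‖g s‖ ≤ C) →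
    Tendsto (fun n => ∫ s, (inner ℝ (x n s) (g s) : ℝ) ∂μ) atTop
      (𝓝 (∫ s, (inner ℝ (x₀ s) (g s) : ℝ) ∂μ))

open Pointwise

abbrev Eucl (d : ℕ) := EuclideanSpace ℝ (Fin d)

section Aux

variable {d : ℕ} {φ : Eucl d → EReal}

theorem aux_Dconvex (hbot : ∀ v : Eucl d, φ v ≠ ⊥)
    (hconv : ∀ u v : Eucl d, ∀ t : ℝ, 0 ≤ t → t ≤ 1 →
      φ (t • u + (1 - t) • v) ≤ (t : EReal) * φ u + ((1 - t : ℝ) : EReal) * φ v) :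
    Convex ℝ {v : Eucl d | φ v ≠ ⊤} := by
  intro u hu v hv p q hp hq hpq
  have hu' : φ u = ((φ u).toReal : EReal) := (EReal.coe_toReal hu (hbot u)).symm
  have hv' : φ v = ((φ v).toReal : EReal) := (EReal.coe_toReal hv (hbot v)).symm
  have h := hconv u v p hp (by linarith)
  rw [hu', hv'] at h
  have hq' : 1 - p = q := by linarith
  rw [hq'] at h
  have hco : (p : EReal) * ((φ u).toReal : EReal) + (q : EReal) * ((φ v).toReal : EReal)
      = ((p * (φ u).toReal + q * (φ v).toReal : ℝ) : EReal) := by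
    rw [← EReal.coe_mul, ← EReal.coe_mul, ← EReal.coe_add]
  rw [hco] at h
  exact ne_top_of_le_ne_top (EReal.coe_ne_top _) h

theorem aux_fconvexOn (hbot : ∀ v : Eucl d, φ v ≠ ⊥)
    (hconv : ∀ u v : Eucl d, ∀ t : ℝ, 0 ≤ t → t ≤ 1 →
      φ (t • u + (1 - t) • v) ≤ (t : EReal) * φ u + ((1 - t : ℝ) : EReal) * φ v) :
    ConvexOn ℝ {v : Eucl d | φ v ≠ ⊤} (fun v => (φ v).toReal) := by
  refine ⟨aux_Dconvex hbot hconv, ?_⟩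
  intro u hu v hv p q hp hq hpq
  have hu' : φ u = ((φ u).toReal : EReal) := (EReal.coe_toReal hu (hbot u)).symm
  have hv' : φ v = ((φ v).toReal : EReal) := (EReal.coe_toReal hv (hbot v)).symm
  have h := hconv u v p hp (by linarith)
  rw [hu', hv'] at h
  have hq' : 1 - p = q := by linarith
  rw [hq'] at h
  have hco : (p : EReal) * ((φ u).toReal : EReal) + (q : EReal) * ((φ v).toReal : EReal)
      = ((p * (φ u).toReal + q * (φ v).toReal : ℝ) : EReal) := by
    rw [← EReal.coe_mul, ← EReal.coe_mul, ← EReal.coe_add]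
  rw [hco] at h
  calc (φ (p • u + q • v)).toReal
      ≤ ((p * (φ u).toReal + q * (φ v).toReal : ℝ) : EReal).toReal :=
        EReal.toReal_le_toReal h (hbot _) (EReal.coe_ne_top _)
    _ = p * (φ u).toReal + q * (φ v).toReal := EReal.toReal_coe _
    _ = p • (φ u).toReal + q • (φ v).toReal := by simp [smul_eq_mul]

theorem aux_cont (hbot : ∀ v : Eucl d, φ v ≠ ⊥)
    (hconv : ∀ u v : Eucl d, ∀ t : ℝ, 0 ≤ t → t ≤ 1 →
      φ (t • u + (1 - t) • v) ≤ (t : EReal) * φ u + ((1 - t : ℝ) : EReal) * φ v) :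
    ContinuousOn (fun v => (φ v).toReal) (interior {v : Eucl d | φ v ≠ ⊤}) :=
  ((aux_fconvexOn hbot hconv).subset interior_subset
    (aux_Dconvex hbot hconv).interior).continuousOn isOpen_interior

theorem aux_subgrad (hbot : ∀ v : Eucl d, φ v ≠ ⊥)
    (hconv : ∀ u v : Eucl d, ∀ t : ℝ, 0 ≤ t → t ≤ 1 →
      φ (t • u + (1 - t) • v) ≤ (t : EReal) * φ u + ((1 - t : ℝ) : EReal) * φ v)
    {a : Eucl d} (ha : a ∈ interior {v : Eucl d | φ v ≠ ⊤}) :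
    ∃ y : Eucl d, ∀ v : Eucl d,
      (((φ a).toReal + inner ℝ (v - a) y : ℝ) : EReal) ≤ φ v := by
  classical
  set D := {v : Eucl d | φ v ≠ ⊤} with hDdef
  set f : Eucl d → ℝ := fun v => (φ v).toReal with hfdef
  have hDc : Convex ℝ D := aux_Dconvex hbot hconv
  have hfc : ConvexOn ℝ D f := aux_fconvexOn hbot hconv
  have haD : a ∈ D := interior_subset ha
  -- a Lipschitz ball around `a`
  have hLL : LocallyLipschitzOn (interior D) f :=
    (hfc.subset interior_subset hDc.interior).locallyLipschitzOn isOpen_interior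
  obtain ⟨K, tset, htset, hK⟩ := hLL ha
  rw [isOpen_interior.nhdsWithin_eq ha] at htset
  obtain ⟨r, hrpos, hrsub⟩ := Metric.mem_nhds_iff.mp
    (Filter.inter_mem htset (isOpen_interior.mem_nhds ha))
  have hKball : LipschitzOnWith K f (Metric.ball a r) :=
    hK.mono (fun z hz => (hrsub hz).1)
  have hballD : Metric.ball a r ⊆ D := fun z hz => interior_subset (hrsub hz).2
  -- admissibility radius
  set τ : Eucl d → ℝ := fun h => r / (‖h‖ + 1) with hτdef
  have hτpos : ∀ h : Eucl d, 0 < τ h := fun h => by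
    have : (0:ℝ) < ‖h‖ + 1 := by positivity
    exact div_pos hrpos this
  have hmemball : ∀ (h : Eucl d) (t' : ℝ), t' ∈ Ioo (0:ℝ) (τ h) →
      a + t' • h ∈ Metric.ball a r := by
    intro h t' ht'
    rw [Metric.mem_ball, dist_eq_norm, add_sub_cancel_left, norm_smul,
      Real.norm_eq_abs, abs_of_pos ht'.1]
    calc t' * ‖h‖ ≤ t' * (‖h‖ + 1) := by nlinarith [ht'.1, norm_nonneg h]
      _ < (τ h) * (‖h‖ + 1) := by nlinarith [ht'.2, norm_nonneg h, ht'.1]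
      _ = r := by rw [hτdef]; field_simp
  have hmemD : ∀ (h : Eucl d) (t' : ℝ), t' ∈ Ioo (0:ℝ) (τ h) → a + t' • h ∈ D :=
    fun h t' ht' => hballD (hmemball h t' ht')
  -- difference quotients
  set q : Eucl d → ℝ → ℝ := fun h t' => (f (a + t' • h) - f a) / t' with hqdef
  -- monotonicity of difference quotients
  have hqmono : ∀ (h : Eucl d) (s' t' : ℝ), 0 < s' → s' ≤ t' → a + t' • h ∈ D →
      q h s' ≤ q h t' := by
    intro h s' t' hs' hst htD
    have ht' : 0 < t' := lt_of_lt_of_le hs' hst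
    rcases eq_or_lt_of_le hst with rfl | hlt
    · exact le_rfl
    have hline : ∀ c : ℝ, (AffineMap.lineMap a (a + h) : ℝ →ᵃ[ℝ] Eucl d) c = a + c • h := by
      intro c
      rw [AffineMap.lineMap_apply]
      simp [vsub_eq_sub, add_sub_cancel_left, add_comm]
    have hgc : ConvexOn ℝ ((AffineMap.lineMap a (a + h) : ℝ →ᵃ[ℝ] Eucl d) ⁻¹' D)
        (f ∘ (AffineMap.lineMap a (a + h) : ℝ →ᵃ[ℝ] Eucl d)) :=
      hfc.comp_affineMap _
    have h0m : (0:ℝ) ∈ (AffineMap.lineMap a (a + h) : ℝ →ᵃ[ℝ] Eucl d) ⁻¹' D := by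
      simp only [Set.mem_preimage, hline]; simpa using haD
    have htm : t' ∈ (AffineMap.lineMap a (a + h) : ℝ →ᵃ[ℝ] Eucl d) ⁻¹' D := by
      simp only [Set.mem_preimage, hline]; exact htD
    have hsm : s' ∈ (AffineMap.lineMap a (a + h) : ℝ →ᵃ[ℝ] Eucl d) ⁻¹' D := by
      have hseg : segment ℝ (0:ℝ) t' ⊆ _ := (hgc.1).segment_subset h0m htm
      apply hseg
      rw [segment_eq_Icc ht'.le]
      exact ⟨hs'.le, hst⟩
    have hsec := hgc.secant_mono h0m hsm htm (ne_of_gt hs') (ne_of_gt ht') hst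
    simp only [Function.comp_apply, hline, sub_zero, zero_smul, add_zero] at hsec
    exact hsec
  -- boundedness of difference quotients
  have hqbdd : ∀ (h : Eucl d) (t' : ℝ), t' ∈ Ioo (0:ℝ) (τ h) → |q h t'| ≤ K * ‖h‖ := by
    intro h t' ht'
    have hd := hKball.dist_le_mul _ (hmemball h t' ht') _ (Metric.mem_ball_self hrpos)
    rw [Real.dist_eq, dist_eq_norm, add_sub_cancel_left, norm_smul, Real.norm_eq_abs,
      abs_of_pos ht'.1] at hd
    rw [hqdef, abs_div, abs_of_pos ht'.1, div_le_iff₀ ht'.1]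
    calc |f (a + t' • h) - f a| ≤ K * (t' * ‖h‖) := hd
      _ = K * ‖h‖ * t' := by ring
  have hnonempty : ∀ (h : Eucl d) (δ : ℝ), 0 < δ → (q h '' Ioo 0 δ).Nonempty :=
    fun h δ hδ => ⟨q h (δ/2), Set.mem_image_of_mem _ ⟨by linarith, by linarith⟩⟩
  have hbddbelow : ∀ (h : Eucl d) (δ : ℝ), δ ≤ τ h → BddBelow (q h '' Ioo 0 δ) := by
    intro h δ hδ
    refine ⟨-(K * ‖h‖), fun z hz => ?_⟩
    obtain ⟨t', ht', rfl⟩ := hz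
    have := hqbdd h t' ⟨ht'.1, lt_of_lt_of_le ht'.2 hδ⟩
    exact neg_le_of_abs_le this
  set N : Eucl d → ℝ := fun h => sInf (q h '' Ioo 0 (τ h)) with hNdef
  have hNle : ∀ (h : Eucl d) (t' : ℝ), t' ∈ Ioo (0:ℝ) (τ h) → N h ≤ q h t' :=
    fun h t' ht' => csInf_le (hbddbelow h (τ h) le_rfl) (Set.mem_image_of_mem _ ht')
  -- independence of the inf from the cutoff
  have hindep : ∀ (h : Eucl d) (δ : ℝ), 0 < δ → δ ≤ τ h →
      sInf (q h '' Ioo 0 δ) = N h := by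
    intro h δ hδ hδτ
    apply le_antisymm
    · refine le_csInf (hnonempty h (τ h) (hτpos h)) ?_
      rintro b ⟨t', ht', rfl⟩
      have h0 : 0 < min t' δ := lt_min ht'.1 hδ
      have ht'' : min t' δ / 2 ∈ Ioo (0:ℝ) δ :=
        ⟨by linarith, by
          have : min t' δ ≤ δ := min_le_right _ _
          linarith⟩
      refine le_trans (csInf_le (hbddbelow h δ hδτ) (Set.mem_image_of_mem _ ht'')) ?_
      refine hqmono h _ t' ht''.1 ?_ (hmemD h t' ht')
      have h1 : min t' δ ≤ t' := min_le_left _ _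
      linarith
    · exact csInf_le_csInf (hbddbelow h (τ h) le_rfl) (hnonempty h δ hδ)
        (Set.image_mono (Set.Ioo_subset_Ioo le_rfl hδτ))
  -- positive homogeneity
  have hNhom : ∀ (c : ℝ), 0 < c → ∀ (h : Eucl d), N (c • h) = c * N h := by
    intro c hc h
    set δ : ℝ := min (τ (c • h)) (τ h / c) with hδdef
    have hδpos : 0 < δ := lt_min (hτpos _) (div_pos (hτpos h) hc)
    have hqscale : ∀ t' : ℝ, 0 < t' → q (c • h) t' = c * q h (c * t') := by
      intro t' ht'
      show (f (a + t' • (c • h)) - f a) / t' = c * ((f (a + (c * t') • h) - f a) / (c * t'))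
      rw [smul_smul, mul_comm t' c]
      field_simp
    have himg : q (c • h) '' Ioo 0 δ = (fun z => c * z) '' (q h '' Ioo 0 (c * δ)) := by
      ext z
      constructor
      · rintro ⟨t', ht', rfl⟩
        exact ⟨q h (c * t'), Set.mem_image_of_mem _
          ⟨mul_pos hc ht'.1, by nlinarith [ht'.2]⟩, (hqscale t' ht'.1).symm⟩
      · rintro ⟨w, ⟨u, hu, rfl⟩, rfl⟩
        refine ⟨u / c, ⟨div_pos hu.1 hc, ?_⟩, ?_⟩
        · rw [div_lt_iff₀ hc]; nlinarith [hu.2]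
        · rw [hqscale (u / c) (div_pos hu.1 hc), mul_div_cancel₀ _ hc.ne']
    have h1 : N (c • h) = sInf (q (c • h) '' Ioo 0 δ) :=
      (hindep (c • h) δ hδpos (min_le_left _ _)).symm
    have h2 : sInf (q h '' Ioo 0 (c * δ)) = N h := by
      refine hindep h (c * δ) (by positivity) ?_
      have : δ ≤ τ h / c := min_le_right _ _
      rw [le_div_iff₀ hc] at this
      linarith [this]
    have h3 : (fun z => c * z) '' (q h '' Ioo 0 (c * δ)) = c • (q h '' Ioo 0 (c * δ)) := by
      ext w; simp [Set.mem_smul_set, smul_eq_mul]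
    rw [h1, himg, h3, Real.sInf_smul_of_nonneg hc.le, smul_eq_mul, h2]
  -- subadditivity
  have hNsub : ∀ h₁ h₂ : Eucl d, N (h₁ + h₂) ≤ N h₁ + N h₂ := by
    intro h₁ h₂
    refine le_of_forall_pos_le_add ?_
    intro ε hε
    obtain ⟨b₁, ⟨t₁, ht₁, rfl⟩, hb₁⟩ := exists_lt_of_csInf_lt (hnonempty h₁ _ (hτpos h₁))
      (lt_add_of_pos_right (N h₁) (by linarith : (0:ℝ) < ε/2))
    obtain ⟨b₂, ⟨t₂, ht₂, rfl⟩, hb₂⟩ := exists_lt_of_csInf_lt (hnonempty h₂ _ (hτpos h₂))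
      (lt_add_of_pos_right (N h₂) (by linarith : (0:ℝ) < ε/2))
    set t : ℝ := min (min (t₁/2) (t₂/2)) (τ (h₁ + h₂)/2) with htdef
    have htpos : 0 < t := by
      have p1 : (0:ℝ) < t₁/2 := by linarith [ht₁.1]
      have p2 : (0:ℝ) < t₂/2 := by linarith [ht₂.1]
      have p3 : (0:ℝ) < τ (h₁ + h₂)/2 := by linarith [hτpos (h₁+h₂)]
      exact lt_min (lt_min p1 p2) p3
    have htτ : t ∈ Ioo (0:ℝ) (τ (h₁ + h₂)) :=
      ⟨htpos, lt_of_le_of_lt (min_le_right _ _) (by linarith [hτpos (h₁+h₂)])⟩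
    have ht12 : t ≤ t₁/2 := le_trans (min_le_left _ _) (min_le_left (t₁/2) (t₂/2))
    have ht22 : t ≤ t₂/2 := le_trans (min_le_left _ _) (min_le_right (t₁/2) (t₂/2))
    have h2t1 : 2 * t ≤ t₁ := by linarith
    have h2t2 : 2 * t ≤ t₂ := by linarith
    have hm1 : a + (2*t) • h₁ ∈ D := by
      rcases eq_or_lt_of_le h2t1 with heq | hlt
      · rw [heq]; exact hmemD h₁ t₁ ht₁
      · exact hmemD h₁ (2*t) ⟨by linarith, lt_trans hlt ht₁.2⟩
    have hm2 : a + (2*t) • h₂ ∈ D := by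
      rcases eq_or_lt_of_le h2t2 with heq | hlt
      · rw [heq]; exact hmemD h₂ t₂ ht₂
      · exact hmemD h₂ (2*t) ⟨by linarith, lt_trans hlt ht₂.2⟩
    have hkey : q (h₁ + h₂) t ≤ q h₁ (2*t) + q h₂ (2*t) := by
      have e1 : a + t • (h₁ + h₂)
          = (1/2 : ℝ) • (a + (2*t) • h₁) + (1/2 : ℝ) • (a + (2*t) • h₂) := by
        module
      have hcx := hfc.2 hm1 hm2 (by norm_num : (0:ℝ) ≤ 1/2) (by norm_num : (0:ℝ) ≤ 1/2)
        (by norm_num : (1/2 : ℝ) + 1/2 = 1)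
      rw [← e1] at hcx
      simp only [smul_eq_mul] at hcx
      show (f (a + t • (h₁ + h₂)) - f a) / t ≤ (f (a + (2*t) • h₁) - f a) / (2*t)
        + (f (a + (2*t) • h₂) - f a) / (2*t)
      have h2tpos : (0:ℝ) < 2*t := by linarith
      rw [← add_div, div_le_div_iff₀ htpos h2tpos]
      nlinarith [hcx]
    have hq1 : q h₁ (2*t) ≤ q h₁ t₁ := hqmono h₁ (2*t) t₁ (by linarith) h2t1 (hmemD h₁ t₁ ht₁)
    have hq2 : q h₂ (2*t) ≤ q h₂ t₂ := hqmono h₂ (2*t) t₂ (by linarith) h2t2 (hmemD h₂ t₂ ht₂)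
    have hNt : N (h₁ + h₂) ≤ q (h₁ + h₂) t := hNle _ t htτ
    linarith
  -- N 0 = 0
  have hN0 : N (0 : Eucl d) = 0 := by
    have himg : q (0 : Eucl d) '' Ioo 0 (τ 0) = {0} := by
      have hc : ∀ t' ∈ Ioo (0:ℝ) (τ 0), q (0 : Eucl d) t' = 0 := by
        intro t' ht'
        show (f (a + t' • (0 : Eucl d)) - f a) / t' = 0
        simp
      rw [Set.image_congr hc]
      exact (Set.nonempty_Ioo.mpr (hτpos 0)).image_const 0
    show sInf (q (0 : Eucl d) '' Ioo 0 (τ 0)) = 0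
    rw [himg, csInf_singleton]
  -- Hahn–Banach
  obtain ⟨g, -, hg⟩ := exists_extension_of_le_sublinear ⟨⊥, 0⟩ N
    (fun c hc x => hNhom c hc x) hNsub
    (fun x => by
      have hx0 : (x : Eucl d) = 0 := by
        have h2 := x.2
        rw [Submodule.mem_bot] at h2
        exact h2
      simp [hx0, hN0])
  set y : Eucl d := (InnerProductSpace.toDual ℝ (Eucl d)).symm
    (LinearMap.toContinuousLinearMap g) with hydef
  have hyg : ∀ w : Eucl d, (inner ℝ y w : ℝ) = g w := by
    intro w
    rw [hydef, InnerProductSpace.toDual_symm_apply]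
    rfl
  refine ⟨y, fun v => ?_⟩
  by_cases hvD : φ v = ⊤
  · rw [hvD]; exact le_top
  · have hvD' : v ∈ D := hvD
    have ht₀pos : 0 < min (τ (v - a) / 2) 1 := lt_min (by linarith [hτpos (v - a)]) one_pos
    have ht₀mem : min (τ (v - a) / 2) 1 ∈ Ioo (0:ℝ) (τ (v - a)) :=
      ⟨ht₀pos, lt_of_le_of_lt (min_le_left _ _) (by linarith [hτpos (v - a)])⟩
    have hv1 : a + (1:ℝ) • (v - a) = v := by rw [one_smul]; abel
    have hmono := hqmono (v - a) (min (τ (v - a) / 2) 1) 1 ht₀pos (min_le_right _ _)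
      (by rw [hv1]; exact hvD')
    have hq1 : q (v - a) 1 = f v - f a := by
      show (f (a + (1:ℝ) • (v - a)) - f a) / 1 = f v - f a
      rw [hv1, div_one]
    have hchain : f a + (inner ℝ (v - a) y : ℝ) ≤ f v := by
      have h1 : g (v - a) ≤ N (v - a) := hg (v - a)
      have h2 : N (v - a) ≤ q (v - a) (min (τ (v - a) / 2) 1) := hNle (v - a) _ ht₀mem
      have h3 : (inner ℝ (v - a) y : ℝ) = g (v - a) := by
        rw [real_inner_comm]; exact hyg (v - a)
      rw [h3]
      have h4 : q (v - a) (min (τ (v - a) / 2) 1) ≤ f v - f a := by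
        rw [← hq1]; exact hmono
      have := le_trans h1 (le_trans h2 h4)
      linarith
    have hvre : φ v = (((φ v).toReal : ℝ) : EReal) := (EReal.coe_toReal hvD (hbot v)).symm
    rw [hvre]
    exact EReal.coe_le_coe_iff.mpr hchain

end Aux

section Aux2

variable {d : ℕ} {φ : Eucl d → EReal} {ψ : Eucl d → ℝ}

theorem aux_minorant' (hbot : ∀ v : Eucl d, φ v ≠ ⊥) (hψ : ∀ y, fenchel φ y = (ψ y : EReal))
    (v y : Eucl d) : (((inner ℝ v y : ℝ) - ψ y : ℝ) : EReal) ≤ φ v := by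
  have h : ((inner ℝ v y : ℝ) : EReal) - φ v ≤ (ψ y : EReal) := by
    rw [← hψ y]
    exact le_iSup (fun v => ((inner ℝ v y : ℝ) : EReal) - φ v) v
  by_cases htop : φ v = ⊤
  · rw [htop]; exact le_top
  · have hre : φ v = ((φ v).toReal : EReal) := (EReal.coe_toReal htop (hbot v)).symm
    rw [hre] at h ⊢
    rw [← EReal.coe_sub] at h
    have : (inner ℝ v y : ℝ) - (φ v).toReal ≤ ψ y := EReal.coe_le_coe_iff.mp h
    exact EReal.coe_le_coe_iff.mpr (by linarith)

theorem aux_lb (hbot : ∀ v : Eucl d, φ v ≠ ⊥) (hψ : ∀ y, fenchel φ y = (ψ y : EReal))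
    (v : Eucl d) : ((-ψ 0 : ℝ) : EReal) ≤ φ v := by
  have := aux_minorant' hbot hψ v 0
  simpa using this

/-- superlinearity -/
theorem aux_superlin (hbot : ∀ v : Eucl d, φ v ≠ ⊥) (hψcont : Continuous ψ)
    (hψ : ∀ y, fenchel φ y = (ψ y : EReal)) {R : ℝ} (hR : 0 < R) :
    ∃ C : ℝ, ∀ v : Eucl d, ((R * ‖v‖ - C : ℝ) : EReal) ≤ φ v := by
  obtain ⟨C, hC⟩ : ∃ C, ∀ y ∈ Metric.closedBall (0 : Eucl d) R, ψ y ≤ C := by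
    obtain ⟨y₀, -, hy₀⟩ := (isCompact_closedBall (0 : Eucl d) R).exists_isMaxOn
      ⟨0, by simp [hR.le]⟩ (hψcont.continuousOn : ContinuousOn ψ _)
    exact ⟨ψ y₀, fun y hy => hy₀ hy⟩
  refine ⟨C, fun v => ?_⟩
  rcases eq_or_ne v 0 with rfl | hv
  · have h0 : ψ 0 ≤ C := hC 0 (by simp [hR.le])
    refine le_trans ?_ (aux_lb hbot hψ 0)
    exact EReal.coe_le_coe_iff.mpr (by simp; linarith)
  · have hvn : (0:ℝ) < ‖v‖ := norm_pos_iff.mpr hv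
    set y : Eucl d := (R / ‖v‖) • v with hy
    have hyball : y ∈ Metric.closedBall (0 : Eucl d) R := by
      simp only [Metric.mem_closedBall, dist_zero_right, hy, norm_smul, Real.norm_eq_abs]
      rw [abs_of_nonneg (by positivity), div_mul_cancel₀ _ hvn.ne']
    have hinner : (inner ℝ v y : ℝ) = R * ‖v‖ := by
      rw [hy, real_inner_smul_right, real_inner_self_eq_norm_sq]
      field_simp
    have := aux_minorant' hbot hψ v y
    rw [hinner] at this
    exact le_trans (EReal.coe_le_coe_iff.mpr (by have := hC y hyball; linarith)) this


theorem aux_gap_pos (hbot : ∀ v : Eucl d, φ v ≠ ⊥)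
    (hconv : ∀ u v : Eucl d, ∀ t : ℝ, 0 ≤ t → t ≤ 1 →
      φ (t • u + (1 - t) • v) ≤ (t : EReal) * φ u + ((1 - t : ℝ) : EReal) * φ v)
    (hψd : Differentiable ℝ ψ) (hψ : ∀ y, fenchel φ y = (ψ y : EReal))
    {a b : Eucl d} (ha : a ∈ interior {v : Eucl d | φ v ≠ ⊤})
    (hb : b ∈ interior {v : Eucl d | φ v ≠ ⊤}) (hab : b ≠ a) :
    0 < ((φ b).toReal + (φ a).toReal) / 2 - (φ ((2⁻¹ : ℝ) • (b + a))).toReal := by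
  classical
  set D := {v : Eucl d | φ v ≠ ⊤} with hDdef
  set f : Eucl d → ℝ := fun v => (φ v).toReal with hfdef
  set m : Eucl d := (2⁻¹ : ℝ) • (b + a) with hmdef
  have hDc : Convex ℝ D := aux_Dconvex hbot hconv
  have hm : m ∈ interior D := by
    have := hDc.interior hb ha (by norm_num : (0:ℝ) ≤ 2⁻¹) (by norm_num : (0:ℝ) ≤ 2⁻¹)
      (by norm_num : (2⁻¹:ℝ) + 2⁻¹ = 1)
    rwa [hmdef, smul_add]
  have haD : a ∈ D := interior_subset ha
  have hbD : b ∈ D := interior_subset hb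
  have hmD : m ∈ D := interior_subset hm
  have hare : φ a = ((f a : ℝ) : EReal) := (EReal.coe_toReal haD (hbot a)).symm
  have hbre : φ b = ((f b : ℝ) : EReal) := (EReal.coe_toReal hbD (hbot b)).symm
  have hmre : φ m = ((f m : ℝ) : EReal) := (EReal.coe_toReal hmD (hbot m)).symm
  obtain ⟨y, hy⟩ := aux_subgrad hbot hconv hm
  have hyb : f m + (inner ℝ (b - m) y : ℝ) ≤ f b := by
    have := hy b; rw [hbre] at this; exact EReal.coe_le_coe_iff.mp this
  have hya : f m + (inner ℝ (a - m) y : ℝ) ≤ f a := by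
    have := hy a; rw [hare] at this; exact EReal.coe_le_coe_iff.mp this
  by_contra hcon
  push_neg at hcon
  -- hcon : (f b + f a)/2 - f m ≤ 0
  have hanb : a - m = -(b - m) := by rw [hmdef]; module
  have hinn : (inner ℝ (a - m) y : ℝ) = -(inner ℝ (b - m) y : ℝ) := by
    rw [hanb, inner_neg_left]
  have heqb : f b = f m + (inner ℝ (b - m) y : ℝ) := by linarith
  have heqa : f a = f m + (inner ℝ (a - m) y : ℝ) := by linarith
  -- ψ y = ⟪m,y⟫ - f m
  have hψy : ψ y = (inner ℝ m y : ℝ) - f m := by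
    have hle : fenchel φ y ≤ (((inner ℝ m y : ℝ) - f m : ℝ) : EReal) := by
      refine iSup_le fun v => ?_
      by_cases hvt : φ v = ⊤
      · rw [hvt, EReal.sub_top]
        exact bot_le
      · have hvre : φ v = ((f v : ℝ) : EReal) := (EReal.coe_toReal hvt (hbot v)).symm
        have hsub : f m + (inner ℝ (v - m) y : ℝ) ≤ f v := by
          have := hy v; rw [hvre] at this; exact EReal.coe_le_coe_iff.mp this
        rw [hvre, ← EReal.coe_sub]
        refine EReal.coe_le_coe_iff.mpr ?_
        have hexp : (inner ℝ (v - m) y : ℝ) = (inner ℝ v y : ℝ) - (inner ℝ m y : ℝ) :=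
          inner_sub_left v m y
        linarith [hsub, hexp]
    have hge : (((inner ℝ m y : ℝ) - f m : ℝ) : EReal) ≤ fenchel φ y := by
      have := le_iSup (fun v => ((inner ℝ v y : ℝ) : EReal) - φ v) m
      rw [hmre] at this
      rw [← EReal.coe_sub] at this
      exact this
    have heq := le_antisymm hle hge
    rw [hψ y] at heq
    exact EReal.coe_eq_coe_iff.mp heq
  -- minimality of G_a at y
  have hmin : ∀ (w : Eucl d), f w = f m + (inner ℝ (w - m) y : ℝ) → w ∈ D →
      fderiv ℝ ψ y = innerSL ℝ w := by
    intro w heqw hwD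
    have hwre : φ w = ((f w : ℝ) : EReal) := (EReal.coe_toReal hwD (hbot w)).symm
    set G : Eucl d → ℝ := fun y' => ψ y' - (innerSL ℝ w) y' with hGdef
    have hGmin : ∀ y', G y ≤ G y' := by
      intro y'
      have hminor : (inner ℝ w y' : ℝ) - ψ y' ≤ f w := by
        have h5 := aux_minorant' hbot hψ w y'
        rw [hwre] at h5
        have h6 := EReal.coe_le_coe_iff.mp h5
        linarith
      have hGy : G y = -(f w) := by
        rw [hGdef]
        simp only [innerSL_apply_apply]
        rw [hψy, heqw]
        have h7 : (inner ℝ (w - m) y : ℝ) = (inner ℝ w y : ℝ) - (inner ℝ m y : ℝ) :=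
          inner_sub_left w m y
        linarith [h7]
      rw [hGy, hGdef]
      simp only [innerSL_apply_apply]
      linarith [hminor]
    have hloc : IsLocalMin G y := Filter.Eventually.of_forall fun y' => hGmin y'
    have hGdiff : DifferentiableAt ℝ G y :=
      (hψd y).sub ((innerSL ℝ w).differentiableAt)
    have hfderiv : fderiv ℝ G y = fderiv ℝ ψ y - innerSL ℝ w := by
      rw [hGdef]
      rw [fderiv_fun_sub (hψd y) ((innerSL ℝ w).differentiableAt)]
      rw [(innerSL ℝ w).fderiv]
    have := hloc.fderiv_eq_zero
    rw [hfderiv] at this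
    exact sub_eq_zero.mp this
  have hfa : fderiv ℝ ψ y = innerSL ℝ a := hmin a heqa haD
  have hfb : fderiv ℝ ψ y = innerSL ℝ b := hmin b heqb hbD
  have heqab : innerSL ℝ a = innerSL ℝ b := hfa ▸ hfb
  have : (inner ℝ a (a - b) : ℝ) = (inner ℝ b (a - b) : ℝ) := by
    have := congrArg (fun L : Eucl d →L[ℝ] ℝ => L (a - b)) heqab
    simpa using this
  have hz : (inner ℝ (a - b) (a - b) : ℝ) = 0 := by
    rw [inner_sub_left]
    linarith
  have : a - b = 0 := inner_self_eq_zero.mp hz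
  exact hab (by
    have : a = b := by
      have h' := this
      rwa [sub_eq_zero] at h'
    exact this.symm)

end Aux2

section Aux3

variable {d : ℕ} {φ : Eucl d → EReal} {ψ : Eucl d → ℝ}

theorem aux_raymono (hbot : ∀ v : Eucl d, φ v ≠ ⊥)
    (hconv : ∀ u v : Eucl d, ∀ t : ℝ, 0 ≤ t → t ≤ 1 →
      φ (t • u + (1 - t) • v) ≤ (t : EReal) * φ u + ((1 - t : ℝ) : EReal) * φ v)
    {a u : Eucl d} (haD : φ a ≠ ⊤) (huD : φ u ≠ ⊤) {σ : ℝ} (h0 : 0 < σ) (h1 : σ ≤ 1) :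
    ((φ (a + σ • (u - a))).toReal + (φ a).toReal) / 2
      - (φ ((2⁻¹:ℝ) • ((a + σ • (u - a)) + a))).toReal
    ≤ ((φ u).toReal + (φ a).toReal) / 2 - (φ ((2⁻¹:ℝ) • (u + a))).toReal := by
  classical
  set D := {v : Eucl d | φ v ≠ ⊤} with hDdef
  set f : Eucl d → ℝ := fun v => (φ v).toReal with hfdef
  have hfc : ConvexOn ℝ D f := aux_fconvexOn hbot hconv
  set L : ℝ →ᵃ[ℝ] Eucl d := AffineMap.lineMap a u with hLdef
  have hline : ∀ c : ℝ, L c = a + c • (u - a) := by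
    intro c
    rw [hLdef, AffineMap.lineMap_apply]
    simp [vsub_eq_sub, add_comm]
  have hgc : ConvexOn ℝ (L ⁻¹' D) (f ∘ L) := hfc.comp_affineMap L
  have h0P : (0:ℝ) ∈ L ⁻¹' D := by
    simp only [Set.mem_preimage, hline]
    simpa [hDdef] using haD
  have h1P : (1:ℝ) ∈ L ⁻¹' D := by
    simp only [Set.mem_preimage, hline]
    have : a + (1:ℝ) • (u - a) = u := by rw [one_smul]; abel
    rw [this]; exact huD
  have hIcc : Icc (0:ℝ) 1 ⊆ L ⁻¹' D := by
    have := (hgc.1).segment_subset h0P h1P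
    rwa [segment_eq_Icc zero_le_one] at this
  have hmemσ : σ ∈ L ⁻¹' D := hIcc ⟨h0.le, h1⟩
  have hmemσ2 : σ/2 ∈ L ⁻¹' D := hIcc ⟨by linarith, by linarith⟩
  have hmemhalf : (1/2:ℝ) ∈ L ⁻¹' D := hIcc ⟨by norm_num, by norm_num⟩
  -- rewrite goal in terms of g := f ∘ L
  have e1 : a + σ • (u - a) = L σ := (hline σ).symm
  have e2 : (2⁻¹:ℝ) • ((a + σ • (u - a)) + a) = L (σ/2) := by
    rw [hline]; module
  have e3 : (2⁻¹:ℝ) • (u + a) = L (1/2) := by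
    rw [hline]; module
  have e4 : u = L 1 := by rw [hline, one_smul]; abel
  have e5 : a = L 0 := by rw [hline]; simp
  have hgoal : ((f ∘ L) σ + (f ∘ L) 0) / 2 - (f ∘ L) (σ/2)
      ≤ ((f ∘ L) 1 + (f ∘ L) 0) / 2 - (f ∘ L) (1/2) := by
    rcases eq_or_lt_of_le h1 with rfl | hσlt
    · norm_num
    · have hd1 : (0:ℝ) < 1/2 - σ/2 := by linarith
      have hd2 : (0:ℝ) < 1 - σ := by linarith
      have s1 := hgc.secant_mono hmemσ2 hmemhalf h1P
        (by intro hcc; exact absurd hcc (by intro hcc'; linarith) : (1/2:ℝ) ≠ σ/2)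
        (by intro hcc; linarith : (1:ℝ) ≠ σ/2) (by norm_num : (1/2:ℝ) ≤ 1)
      have s2 := hgc.secant_mono h1P hmemσ2 hmemσ
        (by intro hcc; linarith : (σ/2:ℝ) ≠ 1)
        (by intro hcc; linarith : σ ≠ 1) (by linarith : σ/2 ≤ σ)
      -- s1 : (g(1/2) - g(σ/2))/(1/2 - σ/2) ≤ (g 1 - g(σ/2))/(1 - σ/2)
      -- s2 : (g(σ/2) - g 1)/(σ/2 - 1) ≤ (g σ - g 1)/(σ - 1)
      set g : ℝ → ℝ := f ∘ L with hgdef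
      have hsym : (g 1 - g (σ/2))/(1 - σ/2) = (g (σ/2) - g 1)/(σ/2 - 1) := by
        rw [← neg_div_neg_eq]
        congr 1 <;> ring
      have hsym2 : (g σ - g 1)/(σ - 1) = (g 1 - g σ)/(1 - σ) := by
        rw [← neg_div_neg_eq]
        congr 1 <;> ring
      have hchain : (g (1/2) - g (σ/2))/(1/2 - σ/2) ≤ (g 1 - g σ)/(1 - σ) := by
        calc (g (1/2) - g (σ/2))/(1/2 - σ/2) ≤ (g 1 - g (σ/2))/(1 - σ/2) := s1
          _ = (g (σ/2) - g 1)/(σ/2 - 1) := hsym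
          _ ≤ (g σ - g 1)/(σ - 1) := s2
          _ = (g 1 - g σ)/(1 - σ) := hsym2
      rw [div_le_div_iff₀ hd1 hd2] at hchain
      nlinarith [hchain]
  rw [e2, e3]
  rw [show a + σ • (u - a) = L σ from e1]
  calc (f (L σ) + (φ a).toReal) / 2 - f (L (σ/2))
      = ((f ∘ L) σ + (f ∘ L) 0) / 2 - (f ∘ L) (σ/2) := by
        rw [Function.comp_apply, Function.comp_apply, Function.comp_apply, ← e5]
    _ ≤ ((f ∘ L) 1 + (f ∘ L) 0) / 2 - (f ∘ L) (1/2) := hgoal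
    _ = ((φ u).toReal + (φ a).toReal) / 2 - f (L (1/2)) := by
        rw [Function.comp_apply, Function.comp_apply, Function.comp_apply, ← e4, ← e5]

theorem aux_pointwise (hbot : ∀ v : Eucl d, φ v ≠ ⊥)
    (hconv : ∀ u v : Eucl d, ∀ t : ℝ, 0 ≤ t → t ≤ 1 →
      φ (t • u + (1 - t) • v) ≤ (t : EReal) * φ u + ((1 - t : ℝ) : EReal) * φ v)
    (hψd : Differentiable ℝ ψ) (hψ : ∀ y, fenchel φ y = (ψ y : EReal))
    (hd : 1 ≤ d) {a : Eucl d} (ha : a ∈ interior {v : Eucl d | φ v ≠ ⊤})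
    {u : ℕ → Eucl d} (huD : ∀ᶠ k in atTop, φ (u k) ≠ ⊤)
    (hgap : Tendsto (fun k => ((φ (u k)).toReal + (φ a).toReal) / 2
      - (φ ((2⁻¹:ℝ) • (u k + a))).toReal) atTop (𝓝 0)) :
    Tendsto u atTop (𝓝 a) := by
  classical
  set D := {v : Eucl d | φ v ≠ ⊤} with hDdef
  set f : Eucl d → ℝ := fun v => (φ v).toReal with hfdef
  rw [Metric.tendsto_atTop]
  intro ε hε
  obtain ⟨r, hrpos, hball⟩ := Metric.mem_nhds_iff.mp (isOpen_interior.mem_nhds ha)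
  set ε' : ℝ := min ε (r/2) with hε'def
  have hε'pos : 0 < ε' := lt_min hε (by linarith)
  have hε'r : ε' < r := lt_of_le_of_lt (min_le_right _ _) (by linarith)
  -- the sphere is nonempty
  have hspne : (Metric.sphere a ε').Nonempty := by
    refine ⟨a + ε' • EuclideanSpace.single (⟨0, hd⟩ : Fin d) (1:ℝ), ?_⟩
    rw [Metric.mem_sphere, dist_eq_norm, add_sub_cancel_left, norm_smul,
      EuclideanSpace.norm_single]
    simp [abs_of_pos hε'pos]
  have hsubU : Metric.sphere a ε' ⊆ interior D := by
    intro w hw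
    apply hball
    rw [Metric.mem_ball, Metric.mem_sphere.mp hw]
    exact hε'r
  have hmidU : ∀ w ∈ Metric.sphere a ε', (2⁻¹:ℝ) • (w + a) ∈ interior D := by
    intro w hw
    apply hball
    rw [Metric.mem_ball, dist_eq_norm]
    have he : (2⁻¹:ℝ) • (w + a) - a = (2⁻¹:ℝ) • (w - a) := by module
    rw [he, norm_smul]
    have : ‖w - a‖ = ε' := by rw [← dist_eq_norm]; exact Metric.mem_sphere.mp hw
    rw [this]
    simp only [Real.norm_eq_abs]
    rw [abs_of_pos (by norm_num : (0:ℝ) < 2⁻¹)]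
    linarith
  -- continuity of the gap function on the sphere
  have hcontf : ContinuousOn f (interior D) := aux_cont hbot hconv
  set gapf : Eucl d → ℝ := fun w => (f w + f a)/2 - f ((2⁻¹:ℝ) • (w + a)) with hgapfdef
  have hgapfc : ContinuousOn gapf (Metric.sphere a ε') := by
    have hc1 : ContinuousOn f (Metric.sphere a ε') := hcontf.mono hsubU
    have hmap : Continuous (fun w : Eucl d => (2⁻¹:ℝ) • (w + a)) :=
      by fun_prop
    have hc2 : ContinuousOn (fun w => f ((2⁻¹:ℝ) • (w + a))) (Metric.sphere a ε') :=
      hcontf.comp hmap.continuousOn (fun w hw => hmidU w hw)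
    exact ((hc1.add continuousOn_const).div_const 2).sub hc2
  obtain ⟨w₀, hw₀mem, hw₀min⟩ := (isCompact_sphere a ε').exists_isMinOn hspne hgapfc
  have hw₀ne : w₀ ≠ a := by
    intro hcc
    have := Metric.mem_sphere.mp hw₀mem
    rw [hcc, dist_self] at this
    exact absurd this.symm (ne_of_gt hε'pos)
  have hcpos : 0 < gapf w₀ :=
    aux_gap_pos hbot hconv hψd hψ ha (hsubU hw₀mem) hw₀ne
  have hev : ∀ᶠ k in atTop, ((φ (u k)).toReal + (φ a).toReal) / 2
      - (φ ((2⁻¹:ℝ) • (u k + a))).toReal < gapf w₀ :=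
    hgap.eventually_lt_const hcpos
  obtain ⟨N, hN⟩ := Filter.eventually_atTop.mp (huD.and hev)
  refine ⟨N, fun k hk => ?_⟩
  obtain ⟨hkD, hklt⟩ := hN k hk
  by_contra hge
  push_neg at hge
  have hnorm : ‖u k - a‖ = dist (u k) a := (dist_eq_norm _ _).symm
  have hupos : 0 < ‖u k - a‖ := by rw [hnorm]; linarith
  have hε'le : ε' ≤ ‖u k - a‖ := by
    rw [hnorm]; exact le_trans (min_le_left _ _) hge
  set σ : ℝ := ε' / ‖u k - a‖ with hσdef
  have hσ0 : 0 < σ := div_pos hε'pos hupos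
  have hσ1 : σ ≤ 1 := (div_le_one hupos).mpr hε'le
  have hu'mem : a + σ • (u k - a) ∈ Metric.sphere a ε' := by
    rw [Metric.mem_sphere, dist_eq_norm, add_sub_cancel_left, norm_smul, Real.norm_eq_abs,
      abs_of_pos hσ0, hσdef, div_mul_cancel₀ _ hupos.ne']
  have hray := aux_raymono hbot hconv (interior_subset ha) hkD hσ0 hσ1
  have hmin' := hw₀min hu'mem
  -- hmin' : gapf w₀ ≤ gapf (a + σ • (u k - a))
  have hgapfu' : gapf (a + σ • (u k - a)) = ((φ (a + σ • (u k - a))).toReal + (φ a).toReal) / 2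
      - (φ ((2⁻¹:ℝ) • ((a + σ • (u k - a)) + a))).toReal := rfl
  have hmin'' : gapf w₀ ≤ gapf (a + σ • (u k - a)) := hmin'
  rw [hgapfu'] at hmin''
  linarith

end Aux3

section Aux4

variable {d : ℕ} {φ : Eucl d → EReal} {ψ : Eucl d → ℝ}

theorem aux_minorant_real (hbot : ∀ v : Eucl d, φ v ≠ ⊥)
    (hψ : ∀ y, fenchel φ y = (ψ y : EReal)) (v y : Eucl d) (hv : φ v ≠ ⊤) :
    (inner ℝ v y : ℝ) - ψ y ≤ (φ v).toReal := by
  have h := aux_minorant' hbot hψ v y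
  have hre : φ v = ((φ v).toReal : EReal) := (EReal.coe_toReal hv (hbot v)).symm
  rw [hre] at h
  exact EReal.coe_le_coe_iff.mp h

theorem aux_flb (hbot : ∀ v : Eucl d, φ v ≠ ⊥)
    (hψ : ∀ y, fenchel φ y = (ψ y : EReal)) (v : Eucl d) (hv : φ v ≠ ⊤) :
    -ψ 0 ≤ (φ v).toReal := by
  have := aux_minorant_real hbot hψ v 0 hv
  simpa using this

theorem aux_half (hbot : ∀ v : Eucl d, φ v ≠ ⊥)
    (hconv : ∀ u v : Eucl d, ∀ t : ℝ, 0 ≤ t → t ≤ 1 →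
      φ (t • u + (1 - t) • v) ≤ (t : EReal) * φ u + ((1 - t : ℝ) : EReal) * φ v)
    (u v : Eucl d) (hu : φ u ≠ ⊤) (hv : φ v ≠ ⊤) :
    φ ((2⁻¹:ℝ) • (u + v)) ≠ ⊤ ∧
    (φ ((2⁻¹:ℝ) • (u + v))).toReal ≤ ((φ u).toReal + (φ v).toReal)/2 := by
  have hDc := aux_Dconvex hbot hconv
  have hfc := aux_fconvexOn hbot hconv
  have hmem : (2⁻¹:ℝ) • u + (2⁻¹:ℝ) • v ∈ {v : Eucl d | φ v ≠ ⊤} :=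
    hDc hu hv (by norm_num) (by norm_num) (by norm_num)
  have hval := hfc.2 hu hv (by norm_num : (0:ℝ) ≤ 2⁻¹) (by norm_num : (0:ℝ) ≤ 2⁻¹)
    (by norm_num : (2⁻¹:ℝ) + 2⁻¹ = 1)
  have he : (2⁻¹:ℝ) • (u + v) = (2⁻¹:ℝ) • u + (2⁻¹:ℝ) • v := smul_add _ _ _
  constructor
  · rw [he]; exact hmem
  · rw [he]
    simp only [smul_eq_mul] at hval
    calc (φ ((2⁻¹:ℝ) • u + (2⁻¹:ℝ) • v)).toReal
        ≤ 2⁻¹ * (φ u).toReal + 2⁻¹ * (φ v).toReal := hval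
      _ = ((φ u).toReal + (φ v).toReal)/2 := by ring

theorem aux_fenchel_eq (hbot : ∀ v : Eucl d, φ v ≠ ⊥)
    (hconv : ∀ u v : Eucl d, ∀ t : ℝ, 0 ≤ t → t ≤ 1 →
      φ (t • u + (1 - t) • v) ≤ (t : EReal) * φ u + ((1 - t : ℝ) : EReal) * φ v)
    (hψ : ∀ y, fenchel φ y = (ψ y : EReal))
    {a : Eucl d} (ha : a ∈ interior {v : Eucl d | φ v ≠ ⊤}) :
    ∃ y : Eucl d, (inner ℝ a y : ℝ) - ψ y = (φ a).toReal := by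
  obtain ⟨y, hy⟩ := aux_subgrad hbot hconv ha
  have haD : φ a ≠ ⊤ := interior_subset ha
  have hare : φ a = (((φ a).toReal : ℝ) : EReal) := (EReal.coe_toReal haD (hbot a)).symm
  refine ⟨y, ?_⟩
  have hψy : ψ y = (inner ℝ a y : ℝ) - (φ a).toReal := by
    have hle : fenchel φ y ≤ (((inner ℝ a y : ℝ) - (φ a).toReal : ℝ) : EReal) := by
      refine iSup_le fun v => ?_
      by_cases hvt : φ v = ⊤
      · rw [hvt, EReal.sub_top]; exact bot_le
      · have hvre : φ v = (((φ v).toReal : ℝ) : EReal) := (EReal.coe_toReal hvt (hbot v)).symm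
        have hsub : (φ a).toReal + (inner ℝ (v - a) y : ℝ) ≤ (φ v).toReal := by
          have := hy v; rw [hvre] at this; exact EReal.coe_le_coe_iff.mp this
        rw [hvre, ← EReal.coe_sub]
        refine EReal.coe_le_coe_iff.mpr ?_
        have hexp : (inner ℝ (v - a) y : ℝ) = (inner ℝ v y : ℝ) - (inner ℝ a y : ℝ) :=
          inner_sub_left v a y
        linarith
    have hge : (((inner ℝ a y : ℝ) - (φ a).toReal : ℝ) : EReal) ≤ fenchel φ y := by
      have h2 := le_iSup (fun v => ((inner ℝ v y : ℝ) : EReal) - φ v) a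
      rw [hare] at h2
      rw [← EReal.coe_sub] at h2
      exact h2
    have heq := le_antisymm hle hge
    rw [hψ y] at heq
    exact EReal.coe_eq_coe_iff.mp heq
  linarith [hψy]

theorem aux_superlin_real (hbot : ∀ v : Eucl d, φ v ≠ ⊥) (hψcont : Continuous ψ)
    (hψ : ∀ y, fenchel φ y = (ψ y : EReal)) {R : ℝ} (hR : 0 < R) :
    ∃ C : ℝ, 0 ≤ C ∧ ∀ v : Eucl d, φ v ≠ ⊤ → R * ‖v‖ - C ≤ (φ v).toReal := by
  obtain ⟨C, hC⟩ := aux_superlin hbot hψcont hψ (R := R) hR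
  refine ⟨max C 0, le_max_right _ _, fun v hv => ?_⟩
  have h := hC v
  have hre : φ v = (((φ v).toReal : ℝ) : EReal) := (EReal.coe_toReal hv (hbot v)).symm
  rw [hre] at h
  have := EReal.coe_le_coe_iff.mp h
  have h2 : C ≤ max C 0 := le_max_left _ _
  linarith

end Aux4

noncomputable def itermax {S : Type*} (g : ℕ → S → ℝ) : ℕ → S → ℝ
  | 0 => g 0
  | (K+1) => fun s => max (itermax g K s) (g (K+1) s)

theorem itermax_mono {S : Type*} (g : ℕ → S → ℝ) (s : S) :
    Monotone (fun K => itermax g K s) := by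
  apply monotone_nat_of_le_succ
  intro K
  exact le_max_left _ _

theorem le_itermax {S : Type*} (g : ℕ → S → ℝ) {j K : ℕ} (h : j ≤ K) (s : S) :
    g j s ≤ itermax g K s := by
  induction K with
  | zero => rw [Nat.le_zero.mp h]; exact le_rfl
  | succ K ih =>
    rcases Nat.lt_succ_iff_lt_or_eq.mp (Nat.lt_succ_of_le h) with h' | rfl
    · exact le_trans (ih (Nat.lt_succ_iff.mp h')) (le_max_left _ _)
    · exact le_max_right _ _

theorem itermax_le {S : Type*} (g : ℕ → S → ℝ) {K : ℕ} {s : S} {B : ℝ}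
    (h : ∀ j, j ≤ K → g j s ≤ B) : itermax g K s ≤ B := by
  induction K with
  | zero => exact h 0 le_rfl
  | succ K ih =>
    exact max_le (ih fun j hj => h j (le_trans hj (Nat.le_succ K)))
      (h (K+1) le_rfl)

theorem itermax_exists {S : Type*} (g : ℕ → S → ℝ) (K : ℕ) (s : S) :
    ∃ j, j ≤ K ∧ itermax g K s = g j s := by
  induction K with
  | zero => exact ⟨0, le_rfl, rfl⟩
  | succ K ih =>
    obtain ⟨j, hj, hje⟩ := ih
    rcases le_or_gt (g (K+1) s) (itermax g K s) with h | h
    · exact ⟨j, le_trans hj (Nat.le_succ K), by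
        show max (itermax g K s) (g (K+1) s) = g j s
        rw [max_eq_left h]; exact hje⟩
    · exact ⟨K+1, le_rfl, by
        show max (itermax g K s) (g (K+1) s) = g (K+1) s
        rw [max_eq_right h.le]⟩

theorem itermax_measurable {S : Type*} [MeasurableSpace S] {g : ℕ → S → ℝ}
    (hg : ∀ j, Measurable (g j)) (K : ℕ) : Measurable (itermax g K) := by
  induction K with
  | zero => exact hg 0
  | succ K ih => exact Measurable.max ih (hg (K+1))

theorem itermax_integrable {S : Type*} [MeasurableSpace S] {μ : MeasureTheory.Measure S}
    {g : ℕ → S → ℝ} (hg : ∀ j, MeasureTheory.Integrable (g j) μ) (K : ℕ) :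
    MeasureTheory.Integrable (itermax g K) μ := by
  induction K with
  | zero => exact hg 0
  | succ K ih =>
    have heq : itermax g (K+1) = fun s => (itermax g K s) ⊔ (g (K+1) s) := by
      funext s
      show max (itermax g K s) (g (K+1) s) = _
      rfl
    rw [heq]
    exact ih.sup (hg (K+1))

section AuxUI

open MeasureTheory

variable {S : Type*} [MeasurableSpace S] {μ : Measure S} [IsFiniteMeasure μ]
variable {d : ℕ} {φ : Eucl d → EReal} {ψ : Eucl d → ℝ}

theorem aux_UI (hbot : ∀ v : Eucl d, φ v ≠ ⊥) (hψcont : Continuous ψ)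
    (hψ : ∀ y, fenchel φ y = (ψ y : EReal))
    {x : ℕ → S → Eucl d} (hx : ∀ n, Integrable (x n) μ)
    {N : ℕ} {M : ℝ}
    (hg : ∀ n, N ≤ n → (Integrable (fun s => (φ (x n s)).toReal) μ
        ∧ (∀ᵐ s ∂μ, φ (x n s) ≠ ⊤))
        ∧ ∫ s, (φ (x n s)).toReal ∂μ ≤ M) :
    UnifIntegrable x 1 μ := by
  classical
  intro ε hε
  set Ψ : ℝ := |ψ 0| with hΨdef
  have hΨ0 : 0 ≤ Ψ := abs_nonneg _
  set m0 : ℝ := (μ Set.univ).toReal with hm0def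
  have hm00 : 0 ≤ m0 := ENNReal.toReal_nonneg
  set T : ℝ := M + Ψ * m0 with hTdef
  set R : ℝ := max 1 (2 * T / ε) with hRdef
  have hR1 : (1:ℝ) ≤ R := le_max_left _ _
  have hRpos : (0:ℝ) < R := by linarith
  have hTR : T / R ≤ ε / 2 := by
    rcases le_or_gt T 0 with hT | hT
    · have : T / R ≤ 0 := div_nonpos_of_nonpos_of_nonneg hT hRpos.le
      linarith
    · have h2 : 2 * T / ε ≤ R := le_max_right _ _
      rw [div_le_iff₀ hRpos]
      calc T = (2 * T / ε) * (ε / 2) := by field_simp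
        _ ≤ R * (ε / 2) := by
            apply mul_le_mul_of_nonneg_right h2
            linarith
        _ = ε / 2 * R := by ring
  obtain ⟨C, hC0, hCspec⟩ := aux_superlin_real hbot hψcont hψ (R := R) hRpos
  -- head: the finitely many indices < N
  have hhead : UnifIntegrable (fun i : Fin N => x i) 1 μ :=
    unifIntegrable_finite le_rfl (by simp) (fun i => memLp_one_iff_integrable.mpr (hx i))
  obtain ⟨δ₁, hδ₁pos, hδ₁⟩ := hhead hε
  set δ₂ : ℝ := ε / (2 * (C + 1)) with hδ₂def
  have hδ₂pos : 0 < δ₂ := by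
    apply div_pos hε
    nlinarith
  refine ⟨min δ₁ δ₂, lt_min hδ₁pos hδ₂pos, ?_⟩
  intro n sset hmeas hμs
  rcases lt_or_ge n N with hn | hn
  · -- head case
    have := hδ₁ ⟨n, hn⟩ sset hmeas (le_trans hμs (ENNReal.ofReal_le_ofReal (min_le_left _ _)))
    exact this
  · -- tail case
    obtain ⟨⟨hint, hae⟩, hAle⟩ := hg n hn
    have hμs' : (μ sset).toReal ≤ δ₂ := by
      have h1 : μ sset ≤ ENNReal.ofReal δ₂ :=
        le_trans hμs (ENNReal.ofReal_le_ofReal (min_le_right _ _))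
      exact ENNReal.toReal_le_of_le_ofReal hδ₂pos.le h1
    -- convert eLpNorm to the set integral of the norm
    have hkey : eLpNorm (sset.indicator (x n)) 1 μ
        = ENNReal.ofReal (∫ s in sset, ‖x n s‖ ∂μ) := by
      rw [eLpNorm_indicator_eq_eLpNorm_restrict hmeas, eLpNorm_one_eq_lintegral_enorm,
        ← ofReal_integral_norm_eq_lintegral_enorm ((hx n).restrict)]
    rw [hkey]
    refine ENNReal.ofReal_le_ofReal ?_
    -- the pointwise bound ‖x n s‖ ≤ ((φ (x n s)).toReal + C)/R
    have hptw : ∀ᵐ s ∂μ, ‖x n s‖ ≤ ((φ (x n s)).toReal + C)/R := by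
      filter_upwards [hae] with s hs
      have := hCspec (x n s) hs
      rw [le_div_iff₀ hRpos]
      nlinarith
    have hib : Integrable (fun s => ((φ (x n s)).toReal + C)/R) μ :=
      (hint.add (integrable_const C)).div_const R
    have h1 : ∫ s in sset, ‖x n s‖ ∂μ ≤ ∫ s in sset, ((φ (x n s)).toReal + C)/R ∂μ := by
      apply integral_mono_ae ((hx n).norm.restrict) (hib.restrict)
      exact ae_restrict_of_ae hptw
    -- compute and bound the RHS
    have h2 : ∫ s in sset, ((φ (x n s)).toReal + C)/R ∂μ
        = ((∫ s in sset, (φ (x n s)).toReal ∂μ) + C * (μ sset).toReal)/R := by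
      rw [integral_div, integral_add (hint.restrict) ((integrable_const C).restrict)]
      rw [setIntegral_const]
      simp [smul_eq_mul, mul_comm]
      rfl
    -- bound the set integral of f ∘ x n
    have h3 : ∫ s in sset, (φ (x n s)).toReal ∂μ ≤ T := by
      have hsplit := integral_add_compl hmeas hint
      have h4 : -(Ψ * m0) ≤ ∫ s in ssetᶜ, (φ (x n s)).toReal ∂μ := by
        have h5 : ∫ s in ssetᶜ, (-Ψ) ∂μ ≤ ∫ s in ssetᶜ, (φ (x n s)).toReal ∂μ := by
          apply integral_mono_ae ((integrable_const (-Ψ)).restrict) (hint.restrict)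
          refine ae_restrict_of_ae ?_
          filter_upwards [hae] with s hs
          have := aux_flb hbot hψ (x n s) hs
          have habs : -Ψ ≤ -ψ 0 := by
            rw [hΨdef]
            have := le_abs_self (ψ 0)
            linarith
          linarith
        rw [setIntegral_const, measureReal_def] at h5
        have h6 : (μ ssetᶜ).toReal ≤ m0 := by
          rw [hm0def]
          apply ENNReal.toReal_mono (measure_ne_top μ _)
          exact measure_mono (Set.subset_univ _)
        have h7 : (μ ssetᶜ).toReal • (-Ψ) = -((μ ssetᶜ).toReal * Ψ) := by
          rw [smul_eq_mul]; ring
        rw [h7] at h5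
        have h8 : (μ ssetᶜ).toReal * Ψ ≤ m0 * Ψ := mul_le_mul_of_nonneg_right h6 hΨ0
        have h9 : -(m0 * Ψ) ≤ -((μ ssetᶜ).toReal * Ψ) := by linarith
        calc -(Ψ * m0) = -(m0 * Ψ) := by ring
         _ ≤ -((μ ssetᶜ).toReal * Ψ) := h9
         _ ≤ _ := h5
      rw [hTdef]
      have := hsplit
      linarith [hAle]
    calc ∫ s in sset, ‖x n s‖ ∂μ
        ≤ ((∫ s in sset, (φ (x n s)).toReal ∂μ) + C * (μ sset).toReal)/R := by
          rw [← h2]; exact h1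
      _ ≤ (T + C * δ₂)/R := by
          have hnum : (∫ s in sset, (φ (x n s)).toReal ∂μ) + C * (μ sset).toReal
              ≤ T + C * δ₂ := by
            have := mul_le_mul_of_nonneg_left hμs' hC0
            linarith
          rw [div_le_div_iff₀ hRpos hRpos]
          nlinarith [hnum, hRpos]
      _ ≤ T/R + C * δ₂ := by
          rw [add_div]
          have h10 : C * δ₂ / R ≤ C * δ₂ := by
            apply div_le_self ?_ hR1
            positivity
          linarith
      _ ≤ ε/2 + ε/2 := by
          have h11 : C * δ₂ ≤ ε/2 := by
            rw [hδ₂def]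
            rw [mul_div_assoc']
            rw [div_le_iff₀ (by nlinarith : (0:ℝ) < 2*(C+1))]
            nlinarith
          linarith [hTR]
      _ = ε := by ring

end AuxUI

/-- **Norm convergence from weak convergence plus value convergence.** Suppose `φ` is proper
lsc convex, `φ*` is real-valued and differentiable everywhere, `x_n ⇀ x`,
`I_φ(x_n) → I_φ(x) < +∞`, and `x(s) ∈ int dom φ` a.e. Then `‖x_n − x‖₁ → 0`. -/
theorem stmt_10 {S : Type*} [MeasurableSpace S] (μ : Measure S)
    [IsFiniteMeasure μ] [μ.IsComplete] (hμ : μ ≠ 0) (d : ℕ) (hd : 1 ≤ d)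
    (φ : EuclideanSpace ℝ (Fin d) → EReal)
    (hproper : (∀ v, φ v ≠ ⊥) ∧ (∃ v, φ v ≠ ⊤))
    (hlsc : LowerSemicontinuous φ)
    (hconv : ∀ u v : EuclideanSpace ℝ (Fin d), ∀ t : ℝ, 0 ≤ t → t ≤ 1 →
      φ (t • u + (1 - t) • v) ≤ (t : EReal) * φ u + ((1 - t : ℝ) : EReal) * φ v)
    (hconj : ∃ ψ : EuclideanSpace ℝ (Fin d) → ℝ, Differentiable ℝ ψ ∧
      ∀ y, fenchel φ y = (ψ y : EReal))
    (x : ℕ → S → EuclideanSpace ℝ (Fin d)) (x₀ : S → EuclideanSpace ℝ (Fin d))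
    (hx : ∀ n, Integrable (x n) μ) (hx₀ : Integrable x₀ μ)
    (hweak : WeakConvL1 μ x x₀)
    (hfin : Iphi μ φ x₀ ≠ ⊤)
    (hval : Tendsto (fun n => Iphi μ φ (x n)) atTop (𝓝 (Iphi μ φ x₀)))
    (hdom : ∀ᵐ s ∂μ, x₀ s ∈ interior {v : EuclideanSpace ℝ (Fin d) | φ v ≠ ⊤}) :
    Tendsto (fun n => ∫ s, ‖x n s - x₀ s‖ ∂μ) atTop (𝓝 0) := by
  classical
  obtain ⟨hbot, -⟩ := hproper
  obtain ⟨ψ, hψd, hψ⟩ := hconj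
  have hψcont : Continuous ψ := hψd.continuous
  -- basic facts about Iphi
  have h₀ : Integrable (fun s => (φ (x₀ s)).toReal) μ ∧ ∀ᵐ s ∂μ, φ (x₀ s) ≠ ⊤ := by
    by_contra hcc
    exact hfin (by rw [Iphi, if_neg hcc])
  have hI₀ : Iphi μ φ x₀ = ((∫ s, (φ (x₀ s)).toReal ∂μ : ℝ) : EReal) := by
    rw [Iphi, if_pos h₀]
  set A₀ : ℝ := ∫ s, (φ (x₀ s)).toReal ∂μ with hA₀def
  have hgood : ∀ᶠ n in atTop, (Integrable (fun s => (φ (x n s)).toReal) μ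
      ∧ ∀ᵐ s ∂μ, φ (x n s) ≠ ⊤) := by
    have hlt : ∀ᶠ n in atTop, Iphi μ φ (x n) < ⊤ := by
      rw [hI₀] at hval
      exact hval.eventually_lt_const (EReal.coe_lt_top A₀)
    filter_upwards [hlt] with n hn
    by_contra hcc
    rw [Iphi, if_neg hcc] at hn
    exact absurd hn (lt_irrefl ⊤)
  set A : ℕ → ℝ := fun n => ∫ s, (φ (x n s)).toReal ∂μ with hAdef
  have hA : Tendsto A atTop (𝓝 A₀) := by
    have hIn : (fun n => Iphi μ φ (x n)) =ᶠ[atTop] (fun n => ((A n : ℝ) : EReal)) := by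
      filter_upwards [hgood] with n hn
      rw [Iphi, if_pos hn]
    rw [hI₀] at hval
    have := (tendsto_congr' hIn).mp hval
    exact EReal.tendsto_coe.mp this
  -- measurability
  have hφmeas : Measurable φ := hlsc.measurable
  have hfmeas : Measurable (fun v : Eucl d => (φ v).toReal) :=
    measurable_ereal_toReal.comp hφmeas
  have hxaem : ∀ n, AEMeasurable (x n) μ := fun n => (hx n).aemeasurable
  have hx₀aem : AEMeasurable x₀ μ := hx₀.aemeasurable
  -- uniform integrability
  have hUI : UnifIntegrable x 1 μ := by
    have hAlt : ∀ᶠ n in atTop, A n < A₀ + 1 :=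
      hA.eventually_lt_const (by linarith : A₀ < A₀ + 1)
    obtain ⟨N, hN⟩ := eventually_atTop.mp (hgood.and hAlt)
    exact aux_UI hbot hψcont hψ hx (N := N) (M := A₀ + 1)
      (fun n hn => ⟨(hN n hn).1, ((hN n hn).2).le⟩)
  -- the defect functional
  set hfun : ℕ → S → ℝ := fun n s => ((φ (x n s)).toReal + (φ (x₀ s)).toReal) / 2
      - (φ ((2⁻¹:ℝ) • (x n s + x₀ s))).toReal with hfundef
  have hzaem : ∀ n, AEMeasurable (fun s => (φ ((2⁻¹:ℝ) • (x n s + x₀ s))).toReal) μ :=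
    fun n => hfmeas.comp_aemeasurable (((hxaem n).add hx₀aem).const_smul (2⁻¹:ℝ))
  have hfun_aesm : ∀ n, AEStronglyMeasurable (hfun n) μ := by
    intro n
    have h1 : AEMeasurable (fun s => (φ (x n s)).toReal) μ := hfmeas.comp_aemeasurable (hxaem n)
    have h2 : AEMeasurable (fun s => (φ (x₀ s)).toReal) μ := hfmeas.comp_aemeasurable hx₀aem
    exact (((h1.add h2).div_const 2).sub (hzaem n)).aestronglyMeasurable
  have hfun_nonneg : ∀ᶠ n in atTop, 0 ≤ᵐ[μ] hfun n := by
    filter_upwards [hgood] with n hn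
    filter_upwards [hn.2, h₀.2] with s hs1 hs2
    have half := aux_half hbot hconv (x n s) (x₀ s) hs1 hs2
    show (0:ℝ) ≤ hfun n s
    show (0:ℝ) ≤ ((φ (x n s)).toReal + (φ (x₀ s)).toReal) / 2
      - (φ ((2⁻¹:ℝ) • (x n s + x₀ s))).toReal
    linarith [half.2]
  have hzint_ev : ∀ᶠ n in atTop,
      Integrable (fun s => (φ ((2⁻¹:ℝ) • (x n s + x₀ s))).toReal) μ := by
    filter_upwards [hgood] with n hn
    refine Integrable.mono'
      (g := fun s => |((φ (x n s)).toReal + (φ (x₀ s)).toReal)/2| + |ψ 0|)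
      (((hn.1.add h₀.1).div_const 2).abs.add (integrable_const _))
      ((hzaem n).aestronglyMeasurable) ?_
    filter_upwards [hn.2, h₀.2] with s hs1 hs2
    have half := aux_half hbot hconv (x n s) (x₀ s) hs1 hs2
    have hfl := aux_flb hbot hψ _ half.1
    rw [Real.norm_eq_abs, abs_le]
    have hu1 := le_abs_self (((φ (x n s)).toReal + (φ (x₀ s)).toReal)/2)
    have hu2 := abs_nonneg (((φ (x n s)).toReal + (φ (x₀ s)).toReal)/2)
    have hu3 := le_abs_self (ψ 0)
    have hu4 := neg_abs_le (ψ 0)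
    constructor <;> [linarith [half.2]; linarith [half.2]]
  have hfun_int : ∀ᶠ n in atTop, Integrable (hfun n) μ := by
    filter_upwards [hgood, hzint_ev] with n hn hz
    exact ((hn.1.add h₀.1).div_const 2).sub hz
  have hIfun : Tendsto (fun n => ∫ s, hfun n s ∂μ) atTop (𝓝 0) := by
    obtain ⟨x₀', hx₀'sm, hx₀'eq⟩ := hx₀.1
    have hx₀'int : Integrable x₀' μ := hx₀.congr hx₀'eq
    set yseq : ℕ → Eucl d := TopologicalSpace.denseSeq (Eucl d) with hyseqdef
    have hdense : DenseRange yseq := TopologicalSpace.denseRange_denseSeq _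
    set α : ℕ → S → ℝ := fun j s => (inner ℝ (x₀' s) (yseq j) : ℝ) - ψ (yseq j) with hαdef
    have hαmeas : ∀ j, Measurable (α j) := by
      intro j
      exact ((Continuous.inner continuous_id continuous_const).measurable.comp
        hx₀'sm.measurable).sub measurable_const
    have hαint : ∀ j, Integrable (α j) μ := by
      intro j
      refine Integrable.mono' (g := fun s => ‖x₀' s‖ * ‖yseq j‖ + |ψ (yseq j)|)
        ((hx₀'int.norm.mul_const _).add (integrable_const _))
        ((hαmeas j).aestronglyMeasurable) ?_
      refine Filter.Eventually.of_forall fun s => ?_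
      rw [Real.norm_eq_abs]
      have h1 : |(inner ℝ (x₀' s) (yseq j) : ℝ)| ≤ ‖x₀' s‖ * ‖yseq j‖ :=
        abs_real_inner_le_norm _ _
      have h2 : |α j s| ≤ |(inner ℝ (x₀' s) (yseq j) : ℝ)| + |ψ (yseq j)| := by
        rw [hαdef]
        exact abs_sub _ _
      show |α j s| ≤ ‖x₀' s‖ * ‖yseq j‖ + |ψ (yseq j)|
      linarith
    have hexact : ∀ᵐ s ∂μ, Tendsto (fun K => itermax α K s) atTop
        (𝓝 ((φ (x₀ s)).toReal)) := by
      filter_upwards [hx₀'eq, hdom, h₀.2] with s hse hsU hstop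
      have hαs : ∀ j, α j s = (inner ℝ (x₀ s) (yseq j) : ℝ) - ψ (yseq j) := by
        intro j
        show (inner ℝ (x₀' s) (yseq j) : ℝ) - ψ (yseq j) = _
        rw [← hse]
      have hub : ∀ j, α j s ≤ (φ (x₀ s)).toReal := by
        intro j
        rw [hαs j]
        exact aux_minorant_real hbot hψ _ _ hstop
      rw [Metric.tendsto_atTop]
      intro ε hε
      obtain ⟨y, hy⟩ := aux_fenchel_eq hbot hconv hψ hsU
      have hopen : IsOpen {y' : Eucl d |
          (φ (x₀ s)).toReal - ε < (inner ℝ (x₀ s) y' : ℝ) - ψ y'} :=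
        isOpen_lt continuous_const
          ((Continuous.inner continuous_const continuous_id).sub hψcont)
      have hmem : y ∈ {y' : Eucl d |
          (φ (x₀ s)).toReal - ε < (inner ℝ (x₀ s) y' : ℝ) - ψ y'} := by
        show (φ (x₀ s)).toReal - ε < (inner ℝ (x₀ s) y : ℝ) - ψ y
        rw [hy]
        linarith
      obtain ⟨j₀, hj₀⟩ := hdense.exists_mem_open hopen ⟨y, hmem⟩
      refine ⟨j₀, fun K hK => ?_⟩
      have h1 : α j₀ s ≤ itermax α K s := le_itermax α hK s
      have h2 : itermax α K s ≤ (φ (x₀ s)).toReal := itermax_le α (fun j _ => hub j)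
      have h3 : (φ (x₀ s)).toReal - ε < α j₀ s := by
        rw [hαs j₀]
        exact hj₀
      rw [Real.dist_eq, abs_lt]
      constructor <;> linarith
    have hMCT : Tendsto (fun K => ∫ s, itermax α K s ∂μ) atTop (𝓝 A₀) :=
      integral_tendsto_of_tendsto_of_monotone (fun K => itermax_integrable hαint K) h₀.1
        (Filter.Eventually.of_forall fun s => itermax_mono α s) hexact
    have hsel : ∀ K : ℕ, ∃ g : S → Eucl d, Measurable g ∧ (∃ C : ℝ, ∀ s, ‖g s‖ ≤ C)
        ∧ (∃ C' : ℝ, ∀ s, |ψ (g s)| ≤ C')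
        ∧ (∀ s, (inner ℝ (x₀' s) (g s) : ℝ) - ψ (g s) = itermax α K s) := by
      intro K
      have hp : ∀ s, ∃ j, j ≤ K ∧ itermax α K s = α j s := fun s => itermax_exists α K s
      have hselmeas : Measurable (fun s => Nat.find (hp s)) := by
        refine measurable_find hp fun k => ?_
        by_cases hk : k ≤ K
        · have : {s | k ≤ K ∧ itermax α K s = α k s} = {s | itermax α K s = α k s} := by
            ext s; simp [hk]
          rw [this]
          exact measurableSet_eq_fun (itermax_measurable hαmeas K) (hαmeas k)
        · have : {s | k ≤ K ∧ itermax α K s = α k s} = ∅ := by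
            ext s; simp [hk]
          rw [this]
          exact MeasurableSet.empty
      refine ⟨fun s => yseq (Nat.find (hp s)), measurable_from_top.comp hselmeas,
        ⟨∑ j ∈ Finset.range (K+1), ‖yseq j‖, fun s => ?_⟩,
        ⟨∑ j ∈ Finset.range (K+1), |ψ (yseq j)|, fun s => ?_⟩, fun s => ?_⟩
      · exact Finset.single_le_sum (f := fun j => ‖yseq j‖) (fun j _ => norm_nonneg _)
          (Finset.mem_range.mpr (Nat.lt_succ_of_le (Nat.find_spec (hp s)).1))
      · exact Finset.single_le_sum (f := fun j => |ψ (yseq j)|) (fun j _ => abs_nonneg _)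
          (Finset.mem_range.mpr (Nat.lt_succ_of_le (Nat.find_spec (hp s)).1))
      · exact ((Nat.find_spec (hp s)).2).symm
    rw [Metric.tendsto_atTop]
    intro ε hε
    obtain ⟨K, hK⟩ := (hMCT.eventually (eventually_gt_nhds
      (by linarith : A₀ - ε/4 < A₀))).exists
    obtain ⟨g, hgmeas, ⟨C, hgC⟩, ⟨C', hgC'⟩, hgid⟩ := hsel K
    have hginn : ∀ (w : S → Eucl d), Integrable w μ →
        Integrable (fun s => (inner ℝ (w s) (g s) : ℝ)) μ := by
      intro w hw
      refine Integrable.mono' (hw.norm.mul_const C)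
        (AEStronglyMeasurable.inner hw.1 hgmeas.aestronglyMeasurable) ?_
      refine Filter.Eventually.of_forall fun s => ?_
      rw [Real.norm_eq_abs]
      calc |(inner ℝ (w s) (g s) : ℝ)| ≤ ‖w s‖ * ‖g s‖ := abs_real_inner_le_norm _ _
        _ ≤ ‖w s‖ * C := mul_le_mul_of_nonneg_left (hgC s) (norm_nonneg _)
    have hψg : Integrable (fun s => ψ (g s)) μ := by
      refine Integrable.mono' (integrable_const C')
        ((hψcont.measurable.comp hgmeas).aestronglyMeasurable)
        (Filter.Eventually.of_forall fun s => ?_)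
      rw [Real.norm_eq_abs]
      exact hgC' s
    have hIKeq : ∫ s, itermax α K s ∂μ
        = ∫ s, ((inner ℝ (x₀ s) (g s) : ℝ) - ψ (g s)) ∂μ := by
      refine integral_congr_ae ?_
      filter_upwards [hx₀'eq] with s hs
      rw [← hgid s, hs]
    have hwg := hweak g hgmeas.aestronglyMeasurable ⟨C, Filter.Eventually.of_forall hgC⟩
    have hsplit : ∀ n, ∫ s, ((inner ℝ ((2⁻¹:ℝ) • (x n s + x₀ s)) (g s) : ℝ) - ψ (g s)) ∂μ
        = 2⁻¹ * (∫ s, (inner ℝ (x n s) (g s) : ℝ) ∂μ)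
          + 2⁻¹ * (∫ s, (inner ℝ (x₀ s) (g s) : ℝ) ∂μ) - ∫ s, ψ (g s) ∂μ := by
      intro n
      have hfeq : (fun s => ((inner ℝ ((2⁻¹:ℝ) • (x n s + x₀ s)) (g s) : ℝ) - ψ (g s)))
          = fun s => (2⁻¹ * (inner ℝ (x n s) (g s) : ℝ)
            + 2⁻¹ * (inner ℝ (x₀ s) (g s) : ℝ)) - ψ (g s) := by
        funext s
        rw [real_inner_smul_left, inner_add_left]
        ring
      have hi1 : Integrable (fun s => 2⁻¹ * (inner ℝ (x n s) (g s) : ℝ)) μ :=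
        (hginn _ (hx n)).const_mul _
      have hi2 : Integrable (fun s => 2⁻¹ * (inner ℝ (x₀ s) (g s) : ℝ)) μ :=
        (hginn _ hx₀).const_mul _
      have hi3 : Integrable (fun s => 2⁻¹ * (inner ℝ (x n s) (g s) : ℝ)
          + 2⁻¹ * (inner ℝ (x₀ s) (g s) : ℝ)) μ := hi1.add hi2
      rw [hfeq, integral_sub hi3 hψg, integral_add hi1 hi2,
        integral_const_mul, integral_const_mul]
    have hCK : Tendsto (fun n =>
        ∫ s, ((inner ℝ ((2⁻¹:ℝ) • (x n s + x₀ s)) (g s) : ℝ) - ψ (g s)) ∂μ) atTop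
        (𝓝 (∫ s, itermax α K s ∂μ)) := by
      have hlim := ((hwg.const_mul (2⁻¹:ℝ)).add_const
        (2⁻¹ * ∫ s, (inner ℝ (x₀ s) (g s) : ℝ) ∂μ)).sub_const (∫ s, ψ (g s) ∂μ)
      have hIK2 : ∫ s, itermax α K s ∂μ
          = 2⁻¹ * (∫ s, (inner ℝ (x₀ s) (g s) : ℝ) ∂μ)
            + 2⁻¹ * (∫ s, (inner ℝ (x₀ s) (g s) : ℝ) ∂μ) - ∫ s, ψ (g s) ∂μ := by
        rw [hIKeq, integral_sub (hginn _ hx₀) hψg]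
        ring
      rw [hIK2]
      exact Tendsto.congr (fun n => (hsplit n).symm) hlim
    have hcomp : ∀ᶠ n in atTop, ∫ s, hfun n s ∂μ ≤ (A n + A₀)/2
        - ∫ s, ((inner ℝ ((2⁻¹:ℝ) • (x n s + x₀ s)) (g s) : ℝ) - ψ (g s)) ∂μ := by
      filter_upwards [hgood, hzint_ev] with n hn hzint
      have hzi : Integrable (fun s => (2⁻¹:ℝ) • (x n s + x₀ s)) μ :=
        ((hx n).add hx₀).smul (2⁻¹:ℝ)
      have hIeq : ∫ s, hfun n s ∂μ = (A n + A₀)/2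
          - ∫ s, (φ ((2⁻¹:ℝ) • (x n s + x₀ s))).toReal ∂μ := by
        have hGint : Integrable (fun s => ((φ (x n s)).toReal + (φ (x₀ s)).toReal)/2) μ :=
          (hn.1.add h₀.1).div_const 2
        have h1 : ∫ s, hfun n s ∂μ
            = (∫ s, ((φ (x n s)).toReal + (φ (x₀ s)).toReal)/2 ∂μ)
              - ∫ s, (φ ((2⁻¹:ℝ) • (x n s + x₀ s))).toReal ∂μ :=
          integral_sub hGint hzint
        rw [h1, integral_div, integral_add hn.1 h₀.1]
      have hmin : ∫ s, ((inner ℝ ((2⁻¹:ℝ) • (x n s + x₀ s)) (g s) : ℝ) - ψ (g s)) ∂μ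
          ≤ ∫ s, (φ ((2⁻¹:ℝ) • (x n s + x₀ s))).toReal ∂μ := by
        refine integral_mono_ae ((hginn _ hzi).sub hψg) hzint ?_
        filter_upwards [hn.2, h₀.2] with s h1 h2
        have hz := (aux_half hbot hconv _ _ h1 h2).1
        exact aux_minorant_real hbot hψ _ _ hz
      rw [hIeq]
      linarith
    have hub : Tendsto (fun n => (A n + A₀)/2
        - ∫ s, ((inner ℝ ((2⁻¹:ℝ) • (x n s + x₀ s)) (g s) : ℝ) - ψ (g s)) ∂μ) atTop
        (𝓝 ((A₀ + A₀)/2 - ∫ s, itermax α K s ∂μ)) :=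
      ((hA.add_const A₀).div_const 2).sub hCK
    have hub2 : ∀ᶠ n in atTop, (A n + A₀)/2
        - ∫ s, ((inner ℝ ((2⁻¹:ℝ) • (x n s + x₀ s)) (g s) : ℝ) - ψ (g s)) ∂μ < ε/2 :=
      hub.eventually_lt_const (by linarith : (A₀ + A₀)/2 - ∫ s, itermax α K s ∂μ < ε/2)
    have hlo : ∀ᶠ n in atTop, 0 ≤ ∫ s, hfun n s ∂μ := by
      filter_upwards [hfun_nonneg] with n h1
      exact integral_nonneg_of_ae h1
    obtain ⟨N, hN⟩ := eventually_atTop.mp ((hcomp.and hub2).and hlo)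
    refine ⟨N, fun n hn => ?_⟩
    obtain ⟨⟨c1, c2⟩, c3⟩ := hN n hn
    rw [Real.dist_eq, sub_zero, abs_of_nonneg c3]
    linarith
  -- convergence in measure of hfun to 0
  have htm : TendstoInMeasure μ hfun atTop (0 : S → ℝ) := by
    refine tendstoInMeasure_of_tendsto_eLpNorm one_ne_zero hfun_aesm
      aestronglyMeasurable_const ?_
    simp only [sub_zero]
    have hev : (fun n => eLpNorm (hfun n) 1 μ)
        =ᶠ[atTop] fun n => ENNReal.ofReal (∫ s, hfun n s ∂μ) := by
      filter_upwards [hfun_nonneg, hfun_int] with n hpos hint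
      rw [eLpNorm_one_eq_lintegral_enorm, ← ofReal_integral_norm_eq_lintegral_enorm hint]
      congr 1
      refine integral_congr_ae ?_
      filter_upwards [hpos] with s hs
      have h0 : (0:ℝ) ≤ hfun n s := hs
      rw [Real.norm_eq_abs, abs_of_nonneg h0]
    rw [tendsto_congr' hev]
    simpa using ENNReal.tendsto_ofReal hIfun
  -- final subsequence argument
  refine tendsto_of_subseq_tendsto fun ns hns => ?_
  have htmNs : TendstoInMeasure μ (fun i => hfun (ns i)) atTop (0 : S → ℝ) :=
    fun ε hε => (htm ε hε).comp hns
  obtain ⟨ms, hms_mono, hms_ae⟩ := htmNs.exists_seq_tendsto_ae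
  have htns : Tendsto (fun i => ns (ms i)) atTop atTop :=
    hns.comp hms_mono.tendsto_atTop
  have hgood' : ∀ᶠ i in atTop, (∀ᵐ s ∂μ, φ (x (ns (ms i)) s) ≠ ⊤) :=
    htns.eventually (hgood.mono fun n hn => hn.2)
  obtain ⟨i₀, hi₀⟩ := eventually_atTop.mp hgood'
  have hae_top : ∀ᵐ s ∂μ, ∀ i, i₀ ≤ i → φ (x (ns (ms i)) s) ≠ ⊤ := by
    rw [ae_all_iff]
    intro i
    by_cases hi : i₀ ≤ i
    · filter_upwards [hi₀ i hi] with s hs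
      exact fun _ => hs
    · exact Filter.Eventually.of_forall fun s h => absurd h hi
  have hptws : ∀ᵐ s ∂μ, Tendsto (fun i => x (ns (ms i)) s) atTop (𝓝 (x₀ s)) := by
    filter_upwards [hms_ae, hae_top, hdom] with s h1 h2 h3
    refine aux_pointwise hbot hconv hψd hψ hd h3 (eventually_atTop.mpr ⟨i₀, h2⟩) ?_
    exact h1
  have hui' : UnifIntegrable (fun i => x (ns (ms i))) 1 μ := by
    intro ε hε
    obtain ⟨δ, hδ, h⟩ := hUI hε
    exact ⟨δ, hδ, fun i => h (ns (ms i))⟩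
  have hvitali := tendsto_Lp_finite_of_tendsto_ae (le_refl (1:ENNReal))
    (by simp) (fun i => (hx (ns (ms i))).1) (memLp_one_iff_integrable.mpr hx₀) hui' hptws
  refine ⟨ms, ?_⟩
  have hconv2 : ∀ n, ∫ s, ‖x n s - x₀ s‖ ∂μ
      = (eLpNorm (x n - x₀) 1 μ).toReal := by
    intro n
    have hi : Integrable (fun s => x n s - x₀ s) μ := (hx n).sub hx₀
    have h1 := ofReal_integral_norm_eq_lintegral_enorm hi
    rw [eLpNorm_one_eq_lintegral_enorm]
    have h2 : ∫⁻ s, ‖(x n - x₀) s‖ₑ ∂μ = ∫⁻ s, ‖x n s - x₀ s‖ₑ ∂μ := rfl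
    rw [h2, ← h1, ENNReal.toReal_ofReal (integral_nonneg fun s => norm_nonneg _)]
  have := (ENNReal.tendsto_toReal (by simp : (0:ENNReal) ≠ ⊤)).comp hvitali
  simp only [ENNReal.toReal_zero] at this
  exact Filter.Tendsto.congr (fun i => (hconv2 (ns (ms i))).symm) this
end

section
/- Let φ : ℝ → ℝ ∪ {+∞} be defined by φ(t) = −log t for t > 0 and φ(t) = +∞ for t ≤ 0, let S = [0,1] and let μ be Lebesgue measure on S. Let (x_n)_{n∈ℕ} and x be in L¹_ℝ(S,μ) with x_n, x ∈ dom I_φ (i.e. x_n(s) > 0 and x(s) > 0 almost everywhere and φ ∘ x_n, φ ∘ x are integrable), and suppose x ∈ L∞_ℝ(S,μ). If ∫_S |φ(x_n(s)) − φ(x(s))| dμ(s) → 0, then (x_n) converges to x in μ-measure. -/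
open MeasureTheory Filter Topology Set ENNReal

/-- **Value convergence in `L¹` of the Burg integrand forces convergence in measure.** Let
`φ(t) = −log t` (`t > 0`, `+∞` otherwise), `S = [0,1]` with Lebesgue measure. If `x_n, x` lie
in the domain of `I_φ` (i.e. positive a.e. with `φ ∘ x_n, φ ∘ x` integrable), `x ∈ L∞`, and
`∫_S |φ(x_n(s)) − φ(x(s))| ds → 0`, then `x_n → x` in measure. -/
theorem stmt_16 (x : ℕ → ℝ → ℝ) (x₀ : ℝ → ℝ)
    (hx : ∀ n, Integrable (x n) (volume.restrict (Icc (0:ℝ) 1)))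
    (hx₀ : Integrable x₀ (volume.restrict (Icc (0:ℝ) 1)))
    (hxpos : ∀ n, ∀ᵐ s ∂(volume.restrict (Icc (0:ℝ) 1)), 0 < x n s)
    (hx₀pos : ∀ᵐ s ∂(volume.restrict (Icc (0:ℝ) 1)), 0 < x₀ s)
    (hxint : ∀ n, Integrable (fun s => -Real.log (x n s)) (volume.restrict (Icc (0:ℝ) 1)))
    (hx₀int : Integrable (fun s => -Real.log (x₀ s)) (volume.restrict (Icc (0:ℝ) 1)))
    (hbdd : MemLp x₀ ⊤ (volume.restrict (Icc (0:ℝ) 1)))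
    (hval : Tendsto (fun n => ∫ s, |(-Real.log (x n s)) - (-Real.log (x₀ s))|
        ∂(volume.restrict (Icc (0:ℝ) 1))) atTop (𝓝 0)) :
    TendstoInMeasure (volume.restrict (Icc (0:ℝ) 1)) x atTop x₀ := by
  set μ := volume.restrict (Icc (0:ℝ) 1) with hμ
  -- logs converge in measure
  have hint : ∀ n, Integrable (fun s => (-Real.log (x n s)) - (-Real.log (x₀ s))) μ :=
    fun n => (hxint n).sub hx₀int
  have hlog : TendstoInMeasure μ (fun n s => -Real.log (x n s)) atTop
      (fun s => -Real.log (x₀ s)) := by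
    refine tendstoInMeasure_of_tendsto_eLpNorm one_ne_zero
      (fun n => (hxint n).aestronglyMeasurable) hx₀int.aestronglyMeasurable ?_
    have heq : ∀ n, eLpNorm ((fun s => -Real.log (x n s)) - fun s => -Real.log (x₀ s)) 1 μ
        = ENNReal.ofReal (∫ s, |(-Real.log (x n s)) - (-Real.log (x₀ s))| ∂μ) := by
      intro n
      rw [eLpNorm_one_eq_lintegral_enorm]
      simp only [Pi.sub_apply]
      rw [← ofReal_integral_norm_eq_lintegral_enorm (hint n)]
      simp [Real.norm_eq_abs]
    simp_rw [heq]
    simpa using ENNReal.tendsto_ofReal hval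
  -- essential bound for x₀
  set M : ℝ := (eLpNormEssSup x₀ μ).toReal with hM
  have hM0 : 0 ≤ M := ENNReal.toReal_nonneg
  have hbound : ∀ᵐ s ∂μ, |x₀ s| ≤ M := by
    filter_upwards [ae_le_eLpNormEssSup (f := x₀) (μ := μ)] with s hs
    have hfin : eLpNormEssSup x₀ μ ≠ ⊤ := by
      have := hbdd.2; rwa [eLpNorm_exponent_top, lt_top_iff_ne_top] at this
    have : (ENNReal.toReal (‖x₀ s‖₊ : ℝ≥0∞)) ≤ M := ENNReal.toReal_mono hfin hs
    simpa [Real.norm_eq_abs] using this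
  rw [tendstoInMeasure_iff_dist]
  intro ε hε
  -- choose δ
  set c : ℝ := ε / (M + 1) with hc
  have hc0 : 0 < c := div_pos hε (by linarith)
  set δ : ℝ := Real.log (1 + c) with hδdef
  have hδ : 0 < δ := Real.log_pos (by linarith)
  have key : ∀ n, ∀ᵐ s ∂μ,
      s ∈ {s | ε ≤ dist (x n s) (x₀ s)} →
      s ∈ {s | δ ≤ dist (-Real.log (x n s)) (-Real.log (x₀ s))} := by
    intro n
    filter_upwards [hxpos n, hx₀pos, hbound] with s ha hb hMb hs
    by_contra hlt
    push_neg at hlt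
    simp only [Set.mem_setOf_eq, Real.dist_eq] at hs hlt
    have habs : |Real.log (x n s) - Real.log (x₀ s)| < δ := by
      have : -Real.log (x n s) - -Real.log (x₀ s) = -(Real.log (x n s) - Real.log (x₀ s)) := by
        ring
      rwa [this, abs_neg] at hlt
    set t : ℝ := Real.log (x n s) - Real.log (x₀ s) with ht
    have hxn : x n s = x₀ s * Real.exp t := by
      rw [ht, Real.exp_sub, Real.exp_log ha, Real.exp_log hb]
      field_simp
    have hexp : |Real.exp t - 1| < c := by
      rcases abs_lt.1 habs with ⟨h1, h2⟩
      have hub : Real.exp t < 1 + c := by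
        calc Real.exp t < Real.exp δ := Real.exp_lt_exp.2 h2
        _ = 1 + c := Real.exp_log (by linarith)
      have hlb : 1 - c < Real.exp t := by
        have h3 : Real.exp (-δ) < Real.exp t := Real.exp_lt_exp.2 (by linarith)
        have h4 : Real.exp (-δ) = 1 / (1 + c) := by
          rw [Real.exp_neg, Real.exp_log (by linarith)]
          ring
        have h5 : 1 - c ≤ 1 / (1 + c) := by
          rw [le_div_iff₀ (by linarith : (0:ℝ) < 1 + c)]
          nlinarith [sq_nonneg c]
        linarith
      rw [abs_lt]; constructor <;> linarith
    have : |x n s - x₀ s| < ε := by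
      have : |x n s - x₀ s| = x₀ s * |Real.exp t - 1| := by
        rw [hxn, ← mul_sub_one, abs_mul, abs_of_pos hb]
      rw [this]
      have h6 : x₀ s * |Real.exp t - 1| < x₀ s * c := by
        exact mul_lt_mul_of_pos_left hexp hb
      have h7 : x₀ s * c ≤ M * c := by
        have : x₀ s ≤ M := (le_abs_self _).trans hMb
        exact mul_le_mul_of_nonneg_right this hc0.le
      have h8 : M * c < ε := by
        have : M * c < (M + 1) * c := by nlinarith
        have h9 : (M + 1) * c = ε := by
          rw [hc]; field_simp
        linarith
      linarith
    linarith
  have hmono : ∀ n, μ {s | ε ≤ dist (x n s) (x₀ s)}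
      ≤ μ {s | δ ≤ dist (-Real.log (x n s)) (-Real.log (x₀ s))} := by
    intro n
    exact measure_mono_ae (key n)
  have h0 := tendstoInMeasure_iff_dist.1 hlog δ hδ
  exact tendsto_of_tendsto_of_tendsto_of_le_of_le tendsto_const_nhds h0
    (fun n => zero_le) hmono
end
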